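/- At most one match per pattern position: Let N be an AST root in which every node occurs at most once, let q be a pattern query, and let p be a Match-subpattern occurrence of q reached from the root of q by the child-index path π (a finite sequence of child indices). Then for every node N'' ∈ D(N) there is at most one N' ∈ q(N) such that the node reached from N' by following the child-index path π equals N''. -/

import Mathlib

open Classical
noncomputable section

/-! ### Abstract syntax trees -/

/-- An AST node: a label, an attribute map, and a list of children.  The type
`Attr` stands for the finite partial attribute maps `Σ_M ⇀ 𝔻`. -/
inductive ASTNode (L : Type) (Attr : Type) : Type where
  | mk : L → Attr → List (ASTNode L Attr) → ASTNode L Attr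

namespace ASTNode

variable {L Attr : Type}

def label : ASTNode L Attr → L
  | .mk ℓ _ _ => ℓ

def attrs : ASTNode L Attr → Attr
  | .mk _ A _ => A

def children : ASTNode L Attr → List (ASTNode L Attr)
  | .mk _ _ ns => ns

end ASTNode

/-! ### Scopes -/

/-- A scope: a partial map from node variables to attribute maps. -/
def Scope (I : Type) (Attr : Type) := I → Option Attr

def emptyScope {I Attr : Type} : Scope I Attr := fun _ => none

/-- Left-biased union of scopes. -/
def Scope.union {I Attr : Type} (Γ₁ Γ₂ : Scope I Attr) : Scope I Attr :=
  fun i => (Γ₁ i).orElse (fun _ => Γ₂ i)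

/-- `{i ↦ A} ∪ Γ`. -/
def Scope.insert {I Attr : Type} (i : I) (A : Attr) (Γ : Scope I Attr) : Scope I Attr :=
  fun j => if j = i then some A else Γ j

/-! ### Pattern queries -/

/-- Pattern queries: `AnyNode`, or `Match(ℓ, i, [q₁,…,qₙ], θ)` with `θ` a Boolean
predicate on scopes. -/
inductive Pattern (L : Type) (Attr : Type) (I : Type) : Type where
  | any : Pattern L Attr I
  | node : L → I → List (Pattern L Attr I) → (Scope I Attr → Bool) → Pattern L Attr I

variable {L Attr I : Type}

mutual
/-- Pattern evaluation `⟦q(N)⟧`, returning a Boolean and a scope. -/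
def evalPattern : Pattern L Attr I → ASTNode L Attr → Bool × Scope I Attr
  | .any, _ => (true, emptyScope)
  | .node ℓq i qs θ, .mk ℓ A ns =>
      match evalChildren qs ns with
      | none => (false, emptyScope)
      | some Γc =>
          let Γ : Scope I Attr := Scope.insert i A Γc
          if ℓq = ℓ ∧ θ Γ = true then (true, Γ) else (false, emptyScope)

/-- Evaluate the children: succeeds (returning the union of the child scopes)
iff the lists have equal length and every child pattern matches. -/
def evalChildren : List (Pattern L Attr I) → List (ASTNode L Attr) → Option (Scope I Attr)
  | [], [] => some emptyScope
  | q :: qs, n :: ns =>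
      match evalPattern q n, evalChildren qs ns with
      | (true, Γ₁), some Γ₂ => some (Γ₁.union Γ₂)
      | _, _ => none
  | _, _ => none
end

mutual
/-- The descendants `D(N)` of a node (as a list). -/
def ASTNode.descendants : ASTNode L Attr → List (ASTNode L Attr)
  | .mk ℓ A ns => .mk ℓ A ns :: descendantsList ns

def descendantsList : List (ASTNode L Attr) → List (ASTNode L Attr)
  | [] => []
  | n :: ns => n.descendants ++ descendantsList ns
end

/-- The match set `q(N)`: descendants of `N` on which `q` evaluates to true. -/
def matchSet (q : Pattern L Attr I) (N : ASTNode L Attr) : Set (ASTNode L Attr) :=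
  {N' | N' ∈ N.descendants ∧ ∃ Γ, evalPattern q N' = (true, Γ)}

/-! ### Generalized multisets -/

/-- Lift a list (in particular, a set given as a duplicate-free list) to the
generalized multiset counting occurrences. -/
def listGM (l : List (ASTNode L Attr)) : ASTNode L Attr →₀ ℤ :=
  (l.map (fun x => Finsupp.single x (1 : ℤ))).sum

/-- A view `V_q` is correct for `N` if it maps elements of `q(N)` to `1` and all
other nodes to `0`. -/
def CorrectView (q : Pattern L Attr I) (N : ASTNode L Attr) (V : ASTNode L Attr →₀ ℤ) : Prop :=
  ∀ x, V x = if x ∈ matchSet q N then 1 else 0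

/-- `IVM(q, V, Δ)`: add `Δ(x)` to `V(x)` at every `x` on which `q` evaluates to true. -/
def IVM (q : Pattern L Attr I) (V Δ : ASTNode L Attr →₀ ℤ) : ASTNode L Attr →₀ ℤ :=
  V + Δ.filter (fun x => (evalPattern q x).1 = true)

/-! ### Replacement, depth, ancestors -/

mutual
/-- The replacement `N[R\R']`. -/
def ASTNode.repl (R R' : ASTNode L Attr) : ASTNode L Attr → ASTNode L Attr
  | .mk ℓ A ns =>
      if ASTNode.mk ℓ A ns = R then R' else .mk ℓ A (replList R R' ns)

def replList (R R' : ASTNode L Attr) : List (ASTNode L Attr) → List (ASTNode L Attr)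
  | [] => []
  | n :: ns => ASTNode.repl R R' n :: replList R R' ns
end

mutual
/-- The depth `dep(q)` of a pattern. -/
def Pattern.depth : Pattern L Attr I → ℕ
  | .any => 0
  | .node _ _ qs _ => 1 + depthList qs

def depthList : List (Pattern L Attr I) → ℕ
  | [] => 0
  | q :: qs => max q.depth (depthList qs)
end

/-- `descAt d N M`: `M` is a descendant of `N` at distance exactly `d`. -/
def descAt : ℕ → ASTNode L Attr → ASTNode L Attr → Prop
  | 0, N, M => N = M
  | d + 1, N, M => ∃ c ∈ N.children, descAt d c M

/-- The generalized multiset `{| Aⁱ(R) ↦ 1 : 1 ≤ i ≤ d, Aⁱ(R) exists relative to N |}`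
of ancestors of `R` (in `N`) at distances `1,…,d`. -/
def ancestorsGM (N R : ASTNode L Attr) (d : ℕ) : ASTNode L Attr →₀ ℤ :=
  ∑ i ∈ Finset.Icc 1 d, listGM (N.descendants.filter (fun A => decide (descAt i A R)))

/-- The maximal search set `⌈R, R'⌉_q` (ancestors of `R` are taken in `N`,
ancestors of `R'` in `N[R\R']`). -/
def maxSearchSet (q : Pattern L Attr I) (N R R' : ASTNode L Attr) : ASTNode L Attr →₀ ℤ :=
  listGM R.descendants + ancestorsGM N R q.depth
    - listGM R'.descendants - ancestorsGM (N.repl R R') R' q.depth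

/-! ### Node generators -/

/-- Node generators: `Reuse(i)` or `Gen(ℓ, ā, [g₁,…,gₙ])`, where the attribute
expressions `ā` are collectively a function from scopes to attribute maps. -/
inductive NodeGen (L : Type) (Attr : Type) (I : Type) : Type where
  | reuse : I → NodeGen L Attr I
  | gen : L → (Scope I Attr → Attr) → List (NodeGen L Attr I) → NodeGen L Attr I

mutual
/-- Generator evaluation `⟦g⟧_{Γ,μ}`. -/
def evalGen (Γ : Scope I Attr) (μ : I → ASTNode L Attr) : NodeGen L Attr I → ASTNode L Attr
  | .reuse i => μ i
  | .gen ℓ a gs => .mk ℓ (a Γ) (evalGenList Γ μ gs)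

def evalGenList (Γ : Scope I Attr) (μ : I → ASTNode L Attr) :
    List (NodeGen L Attr I) → List (ASTNode L Attr)
  | [] => []
  | g :: gs => evalGen Γ μ g :: evalGenList Γ μ gs
end

mutual
/-- The matched node pairs `MP(q, R)`. -/
def MP : Pattern L Attr I → ASTNode L Attr → List (Pattern L Attr I × ASTNode L Attr)
  | .any, R => [(.any, R)]
  | .node ℓ i qs θ, .mk ℓ' A ns => (.node ℓ i qs θ, .mk ℓ' A ns) :: MPList qs ns

def MPList : List (Pattern L Attr I) → List (ASTNode L Attr) →
    List (Pattern L Attr I × ASTNode L Attr)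
  | q :: qs, n :: ns => MP q n ++ MPList qs ns
  | _, _ => []
end

mutual
/-- The generated node pairs `GP(g, Γ, μ)`. -/
def GP (Γ : Scope I Attr) (μ : I → ASTNode L Attr) :
    NodeGen L Attr I → List (NodeGen L Attr I × ASTNode L Attr)
  | .reuse i => [(.reuse i, μ i)]
  | .gen ℓ a gs => (.gen ℓ a gs, evalGen Γ μ (.gen ℓ a gs)) :: GPList Γ μ gs

def GPList (Γ : Scope I Attr) (μ : I → ASTNode L Attr) :
    List (NodeGen L Attr I) → List (NodeGen L Attr I × ASTNode L Attr)
  | [] => []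
  | g :: gs => GP Γ μ g ++ GPList Γ μ gs
end

/-- A generator `g` is safe for `(q, R)` with scopes `Γ, μ`: it reuses exactly
the wildcard-matched subtrees of `R`. -/
def SafeGen (q : Pattern L Attr I) (R : ASTNode L Attr) (g : NodeGen L Attr I)
    (Γ : Scope I Attr) (μ : I → ASTNode L Attr) : Prop :=
  ∀ N : ASTNode L Attr,
    (Pattern.any, N) ∈ MP q R ↔ ∃ i, μ i = N ∧ (NodeGen.reuse i, N) ∈ GP Γ μ g

mutual
/-- `|g|`: the number of `Gen` and `Reuse` terms in `g`. -/
def NodeGen.size : NodeGen L Attr I → ℕ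
  | .reuse _ => 1
  | .gen _ _ gs => 1 + sizeGenList gs

def sizeGenList : List (NodeGen L Attr I) → ℕ
  | [] => 0
  | g :: gs => g.size + sizeGenList gs
end

mutual
/-- `|q|`: the number of `Match` and `AnyNode` terms in `q`. -/
def Pattern.size : Pattern L Attr I → ℕ
  | .any => 1
  | .node _ _ qs _ => 1 + sizePatList qs

def sizePatList : List (Pattern L Attr I) → ℕ
  | [] => 0
  | q :: qs => q.size + sizePatList qs
end

/-! ### Paths, occurrences, alignment -/

/-- The node reached from `N` by following the child-index path `π`. -/
def nodeAt (N : ASTNode L Attr) (π : List ℕ) : Option (ASTNode L Attr) :=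
  match π with
  | [] => some N
  | k :: π' => (N.children[k]?).bind fun c => nodeAt c π'

/-- The subpattern occurrence of `q` located at the child-index path `π`. -/
def subAt (q : Pattern L Attr I) (π : List ℕ) : Option (Pattern L Attr I) :=
  match π, q with
  | [], q => some q
  | _ :: _, .any => none
  | k :: π', .node _ _ qs _ => (qs[k]?).bind fun qk => subAt qk π'

/-- `π` is an occurrence of a `Match` subpattern with node variable `i`. -/
def IsMatchVarOcc (q : Pattern L Attr I) (π : List ℕ) (i : I) : Prop :=
  ∃ ℓ qs θ, subAt q π = some (.node ℓ i qs θ)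

/-- `π` is an occurrence of a `Match` subpattern of `q`. -/
def IsMatchOcc (q : Pattern L Attr I) (π : List ℕ) : Prop :=
  ∃ i, IsMatchVarOcc q π i

/-- The node variables of the `Match` subpatterns of `q`. -/
def patVars (q : Pattern L Attr I) : Set I :=
  {i | ∃ π, IsMatchVarOcc q π i}

/-- The scope `Γ_σ` induced by an assignment `σ` of nodes to (paths of)
`Match`-subpattern occurrences of `q`: it maps the node variable of each
`Match` subpattern to the attribute map of the assigned node. -/
def scopeOf (q : Pattern L Attr I) (σ : List ℕ → ASTNode L Attr) : Scope I Attr :=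
  fun i => if h : ∃ π, IsMatchVarOcc q π i then some (σ h.choose).attrs else none

mutual
/-- Structural alignment at depth 0. -/
def align0 : Pattern L Attr I → NodeGen L Attr I → Bool
  | .any, _ => true
  | _, .reuse _ => true
  | .node ℓ _ qs _, .gen ℓ' _ gs =>
      if ℓ = ℓ' ∧ qs.length = gs.length then align0List qs gs else false

def align0List : List (Pattern L Attr I) → List (NodeGen L Attr I) → Bool
  | [], [] => true
  | q :: qs, g :: gs => align0 q g && align0List qs gs
  | _, _ => false
end

/-- Structural alignment at depth `d`. -/
def alignD : ℕ → Pattern L Attr I → NodeGen L Attr I → Bool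
  | 0, q, g => align0 q g
  | _ + 1, .any, _ => false
  | d + 1, .node _ _ qs _, g => qs.attach.any (fun qk => alignD d qk.1 g)

end

/-! Every descendant of `N` is reached from the root along some child-index path, and when no node
of `N` occurs twice that path is unique. If `N₁` and `N₂` are reached along `p₁` and `p₂` and both
reach `N''` along `π`, then `p₁ ++ π` and `p₂ ++ π` both lead to `N''`, so `p₁ = p₂` and
`N₁ = N₂`. -/

theorem List.Nodup.index_eq_of_mem_flatMap {α β : Type*} {l : List α} {f : α → List β}
    (h : (l.flatMap f).Nodup) {i j : ℕ} (hi : i < l.length) (hj : j < l.length) {x : β}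
    (hxi : x ∈ f l[i]) (hxj : x ∈ f l[j]) : i = j := by
  have hdisj := List.pairwise_iff_getElem.mp (List.nodup_flatMap.mp h).2
  by_contra hne
  rcases Nat.lt_or_gt_of_ne hne with hlt | hlt
  · exact hdisj i j hi hj hlt hxi hxj
  · exact hdisj j i hj hi hlt hxj hxi

section Paths

variable {L Attr : Type}

theorem descendantsList_eq_flatMap (ns : List (ASTNode L Attr)) :
    descendantsList ns = ns.flatMap ASTNode.descendants := by
  induction ns with
  | nil => simp [descendantsList]
  | cons n ns ih => simp [descendantsList, ih]

theorem ASTNode.descendants_eq_cons (N : ASTNode L Attr) :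
    N.descendants = N :: N.children.flatMap ASTNode.descendants := by
  cases N
  rw [ASTNode.descendants, descendantsList_eq_flatMap, ASTNode.children]

theorem nodeAt_cons_eq_some {N x : ASTNode L Attr} {k : ℕ} {p : List ℕ} :
    nodeAt N (k :: p) = some x ↔ ∃ hk : k < N.children.length, nodeAt N.children[k] p = some x := by
  simp [nodeAt, Option.bind_eq_some_iff, List.getElem?_eq_some_iff]

theorem nodeAt_append (N : ASTNode L Attr) (p₁ p₂ : List ℕ) :
    nodeAt N (p₁ ++ p₂) = (nodeAt N p₁).bind (nodeAt · p₂) := by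
  induction p₁ generalizing N with
  | nil => rfl
  | cons k p ih => simp only [List.cons_append, nodeAt, Option.bind_assoc, ih]

theorem mem_descendants_of_nodeAt {N x : ASTNode L Attr} {p : List ℕ}
    (h : nodeAt N p = some x) : x ∈ N.descendants := by
  induction p generalizing N with
  | nil =>
    rw [Option.some_inj.mp h.symm, ASTNode.descendants_eq_cons]
    exact List.mem_cons_self
  | cons k p ih =>
    obtain ⟨hk, h⟩ := nodeAt_cons_eq_some.mp h
    rw [ASTNode.descendants_eq_cons]
    exact List.mem_cons_of_mem _ (List.mem_flatMap.mpr ⟨_, List.getElem_mem hk, ih h⟩)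

theorem exists_nodeAt_of_mem_descendants :
    ∀ {N x : ASTNode L Attr}, x ∈ N.descendants → ∃ p, nodeAt N p = some x
  | .mk ℓ A ns, x, h => by
    rw [ASTNode.descendants_eq_cons, List.mem_cons, List.mem_flatMap] at h
    rcases h with rfl | ⟨c, hc, hx⟩
    · exact ⟨[], rfl⟩
    · obtain ⟨k, hk, rfl⟩ := List.getElem_of_mem hc
      obtain ⟨p, hp⟩ := exists_nodeAt_of_mem_descendants hx
      exact ⟨k :: p, nodeAt_cons_eq_some.mpr ⟨hk, hp⟩⟩
termination_by N => sizeOf N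
decreasing_by
  have := List.sizeOf_lt_of_mem hc
  simp only [ASTNode.children, ASTNode.mk.sizeOf_spec] at this ⊢
  omega

theorem ne_of_nodeAt_cons_of_nodup {N x : ASTNode L Attr} {k : ℕ} {p : List ℕ}
    (hN : N.descendants.Nodup) (h : nodeAt N (k :: p) = some x) : x ≠ N := by
  rintro rfl
  obtain ⟨hk, h⟩ := nodeAt_cons_eq_some.mp h
  rw [ASTNode.descendants_eq_cons, List.nodup_cons] at hN
  exact hN.1 (List.mem_flatMap.mpr ⟨_, List.getElem_mem hk, mem_descendants_of_nodeAt h⟩)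

theorem eq_of_nodeAt_eq_some_of_nodup {N x : ASTNode L Attr} {p₁ p₂ : List ℕ}
    (hN : N.descendants.Nodup) (h₁ : nodeAt N p₁ = some x) (h₂ : nodeAt N p₂ = some x) :
    p₁ = p₂ := by
  induction p₁ generalizing N p₂ with
  | nil =>
    cases p₂ with
    | nil => rfl
    | cons k p => exact absurd (Option.some_inj.mp h₁) (ne_of_nodeAt_cons_of_nodup hN h₂).symm
  | cons k₁ p₁ ih =>
    cases p₂ with
    | nil => exact absurd (Option.some_inj.mp h₂) (ne_of_nodeAt_cons_of_nodup hN h₁).symm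
    | cons k₂ p₂ =>
      obtain ⟨hk₁, h₁⟩ := nodeAt_cons_eq_some.mp h₁
      obtain ⟨hk₂, h₂⟩ := nodeAt_cons_eq_some.mp h₂
      rw [ASTNode.descendants_eq_cons, List.nodup_cons] at hN
      obtain rfl : k₁ = k₂ := hN.2.index_eq_of_mem_flatMap hk₁ hk₂
        (mem_descendants_of_nodeAt h₁) (mem_descendants_of_nodeAt h₂)
      rw [ih ((List.nodup_flatMap.mp hN.2).1 _ (List.getElem_mem hk₁)) h₁ h₂]

end Paths

/-- **At most one match per pattern position.** Let `N` be an AST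
root in which every node occurs at most once, `q` a pattern, and `π` the
child-index path of a `Match`-subpattern occurrence of `q`.  Then for every
`N'' ∈ D(N)` there is at most one `N' ∈ q(N)` such that the node reached from
`N'` by following `π` equals `N''`. -/
theorem at_most_one_match_per_position {L Attr I : Type}
    (N : ASTNode L Attr) (hN : N.descendants.Nodup)
    (q : Pattern L Attr I) (π : List ℕ) (hπ : IsMatchOcc q π)
    (N'' : ASTNode L Attr) (hN'' : N'' ∈ N.descendants)
    (N₁ N₂ : ASTNode L Attr)
    (h₁ : N₁ ∈ matchSet q N) (h₂ : N₂ ∈ matchSet q N)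
    (e₁ : nodeAt N₁ π = some N'') (e₂ : nodeAt N₂ π = some N'') :
    N₁ = N₂ := by
  obtain ⟨p₁, hp₁⟩ := exists_nodeAt_of_mem_descendants h₁.1
  obtain ⟨p₂, hp₂⟩ := exists_nodeAt_of_mem_descendants h₂.1
  have hpaths : p₁ ++ π = p₂ ++ π := eq_of_nodeAt_eq_some_of_nodup hN
    (by rw [nodeAt_append, hp₁, Option.bind_some, e₁])
    (by rw [nodeAt_append, hp₂, Option.bind_some, e₂])
  rw [List.append_cancel_right hpaths, hp₂] at hp₁
  exact (Option.some_inj.mp hp₁).symm
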